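/- Let π(dx) ∝ e^{−U(x)} dx be a probability measure on ℝ^d whose potential U is L-Lipschitz continuous. Then for all k ∈ {1,…,d} and all x, y ∈ ℝ^d, the Kullback–Leibler divergence between the one-dimensional conditional distributions satisfies KL(π(·|x_{−k}) ‖ π(·|y_{−k})) ≤ 2L·|x_{−k} − y_{−k}|. -/

import Mathlib

open MeasureTheory ProbabilityTheory Set
open scoped ENNReal NNReal

noncomputable section

abbrev Euc (d : ℕ) := EuclideanSpace ℝ (Fin d)

/-- Total variation distance between two measures. -/
def tvDist {X : Type*} [MeasurableSpace X] (μ ν : Measure X) : ℝ :=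
  ⨆ s : {s : Set X // MeasurableSet s}, |(μ s.1).toReal - (ν s.1).toReal|

/-- Euclidean distance between two sets. -/
def setDist' {X : Type*} [Dist X] (A B : Set X) : ℝ :=
  sInf {r | ∃ x ∈ A, ∃ y ∈ B, r = dist x y}

/-- Update the `k`-th coordinate of `x` to `t`. -/
def updCoord {d : ℕ} (k : Fin d) (t : ℝ) (x : Euc d) : Euc d :=
  WithLp.toLp 2 (Function.update x k t)

/-- Euclidean distance between `x` and `y` after removing coordinate `k`. -/
def distMinus {d : ℕ} (k : Fin d) (x y : Euc d) : ℝ :=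
  Real.sqrt (∑ j ∈ Finset.univ.erase k, (x j - y j) ^ 2)

/-- The Gibbs kernel updating coordinate `k` from conditionals `cond`. -/
def gibbsStep {d : ℕ} (cond : Fin d → Euc d → Measure ℝ) (k : Fin d) (x : Euc d) :
    Measure (Euc d) :=
  (cond k x).map (fun t => updCoord k t x)

/-- Sequentially update coordinates `0, 1, …, n-1`. -/
def sweep {d : ℕ} (cond : Fin d → Euc d → Measure ℝ) : ℕ → Euc d → Measure (Euc d)
  | 0, x => Measure.dirac x
  | (n + 1), x => (sweep cond n x).bind
      (fun u => if h : n < d then gibbsStep cond ⟨n, h⟩ u else Measure.dirac u)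

/-- The systematic-scan Gibbs kernel. -/
def PSS {d : ℕ} (cond : Fin d → Euc d → Measure ℝ) (x : Euc d) : Measure (Euc d) :=
  sweep cond d x

/-- The random-scan Gibbs kernel. -/
def PRS {d : ℕ} (cond : Fin d → Euc d → Measure ℝ) (x : Euc d) : Measure (Euc d) :=
  (d : ℝ≥0∞)⁻¹ • ∑ k : Fin d, gibbsStep cond k x

/-- `N`-fold iterate of a Markov kernel. -/
def iterK {X : Type*} [MeasurableSpace X] (P : X → Measure X) : ℕ → X → Measure X
  | 0, x => Measure.dirac x
  | (n + 1), x => (iterK P n x).bind P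

/-- Distribution after `k` steps of `P` started from `μ`. -/
def iterM {X : Type*} [MeasurableSpace X] (P : X → Measure X) (k : ℕ) (μ : Measure X) :
    Measure X :=
  μ.bind (iterK P k)

/-- Conductance of a `π`-invariant Markov kernel `P`. -/
def conductance {X : Type*} [MeasurableSpace X] (π : Measure X) (P : X → Measure X) : ℝ :=
  sInf {r | ∃ S : Set X, MeasurableSet S ∧ 0 < π S ∧ π S ≤ 1 / 2 ∧
    r = (∫ x in S, (P x Sᶜ).toReal ∂π) / (π S).toReal}

/-- Spectral gap of a `π`-reversible Markov kernel `P`. -/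
def spectralGap {X : Type*} [MeasurableSpace X] (π : Measure X) (P : X → Measure X) : ℝ :=
  sInf {r | ∃ f : X → ℝ, MemLp f 2 π ∧ (∫ x, f x ∂π) = 0 ∧ (∫ x, f x ^ 2 ∂π) ≠ 0 ∧
    r = (∫ x, f x * (f x - ∫ y, f y ∂(P x)) ∂π) / ∫ x, f x ^ 2 ∂π}

/-- ζ-mixing time of `P` started from `μ`, targeting `π`. -/
def mixingTime {X : Type*} [MeasurableSpace X] (π μ : Measure X) (P : X → Measure X)
    (ζ : ℝ) : ℕ∞ :=
  ⨅ (k : ℕ) (_ : tvDist (iterM P k μ) π ≤ ζ), (k : ℕ∞)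

/-- `π` satisfies the `L^q`-Poincaré inequality with constant `C`. -/
def PoincareIneq {d : ℕ} (π : Measure (Euc d)) (q C : ℝ) : Prop :=
  ∀ f : Euc d → ℝ, LocallyLipschitz f →
    ∫ x, |f x - ∫ y, f y ∂π| ^ q ∂π ≤ C⁻¹ * ∫ x, ‖fderiv ℝ f x‖ ^ q ∂π

/-- `π` satisfies the `L^q`-log-Sobolev inequality with constant `C`. -/
def LogSobolevIneq {d : ℕ} (π : Measure (Euc d)) (q C : ℝ) : Prop :=
  ∀ f : Euc d → ℝ, LocallyLipschitz f →
    (∫ x, |f x| ^ q * Real.log (|f x| ^ q) ∂π)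
      - (∫ x, |f x| ^ q ∂π) * Real.log (∫ x, |f x| ^ q ∂π)
    ≤ C⁻¹ * ∫ x, ‖fderiv ℝ f x‖ ^ q ∂π

/-- The conditional distributions of `π` (given by `cond`) are `(M, β)`-TV continuous. -/
def TVContinuousConditionals {d : ℕ} (cond : Fin d → Euc d → Measure ℝ) (M β : ℝ) : Prop :=
  ∀ k : Fin d, ∀ x y : Euc d, tvDist (cond k x) (cond k y) ≤ M * distMinus k x y ^ β

/-- `cond` is a valid family of single-coordinate conditional distributions for `π`:
each `cond k x` is a probability measure, depends only on `x₋ₖ`, is measurable in `x`,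
and disintegrates `π`. -/
def IsConditional {d : ℕ} (π : Measure (Euc d)) (cond : Fin d → Euc d → Measure ℝ) : Prop :=
  (∀ k x, IsProbabilityMeasure (cond k x)) ∧
  (∀ k, Measurable (cond k)) ∧
  (∀ k : Fin d, ∀ x y : Euc d, (∀ j, j ≠ k → x j = y j) → cond k x = cond k y) ∧
  (∀ k : Fin d, π.bind (gibbsStep cond k) = π)

/-- Normalized Gibbs measure with potential `U`. -/
def gibbsTarget {d : ℕ} (U : Euc d → ℝ) : Measure (Euc d) :=
  (∫⁻ x, ENNReal.ofReal (Real.exp (-U x)))⁻¹ •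
    (volume.withDensity fun x => ENNReal.ofReal (Real.exp (-U x)))

/-- Explicit one-dimensional conditional distribution of the Gibbs measure with
potential `U`: the `k`-th coordinate given the others (taken from `x`). -/
def gibbsCond {d : ℕ} (U : Euc d → ℝ) (k : Fin d) (x : Euc d) : Measure ℝ :=
  (∫⁻ t, ENNReal.ofReal (Real.exp (-U (updCoord k t x))))⁻¹ •
    (volume.withDensity fun t => ENNReal.ofReal (Real.exp (-U (updCoord k t x))))

/-! The conditional `π(·|x₋ₖ)` is the exponential tilt of Lebesgue measure on the `k`-th axis by
`φₓ t = -U(x with xₖ := t)`, and the Lipschitz bound gives `|φₓ - φ_y| ≤ L |x₋ₖ - y₋ₖ| =: c`.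
Hence `π(·|x₋ₖ)` is the tilt of the probability measure `ν = π(·|y₋ₖ)` by `g = φₓ - φ_y`, whose
log-likelihood ratio against `ν` is `g - log ∫ e^g dν ≤ c + c`. -/

namespace MeasureTheory

variable {α : Type*} [MeasurableSpace α] {μ : Measure α}

lemma inv_lintegral_smul_withDensity_exp_eq_tilted {φ : α → ℝ} (hφ : AEMeasurable φ μ) :
    (∫⁻ a, ENNReal.ofReal (Real.exp (φ a)) ∂μ)⁻¹ •
      μ.withDensity (fun a => ENNReal.ofReal (Real.exp (φ a))) = μ.tilted φ := by
  rcases eq_zero_or_neZero μ with rfl | hμ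
  · simp
  have hexp_nonneg : 0 ≤ᵐ[μ] fun a => Real.exp (φ a) := ae_of_all _ fun a => (Real.exp_pos _).le
  by_cases hint : Integrable (fun a => Real.exp (φ a)) μ
  · have hZ : (ENNReal.ofReal (∫ a, Real.exp (φ a) ∂μ))⁻¹ ≠ ∞ :=
      ENNReal.inv_ne_top.2 (by simp [integral_exp_pos hint])
    rw [← ofReal_integral_eq_lintegral_ofReal hint hexp_nonneg, ← withDensity_smul' _ _ hZ,
      Measure.tilted]
    congr with a
    rw [Pi.smul_apply, smul_eq_mul, div_eq_inv_mul, ENNReal.ofReal_mul (by positivity),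
      ENNReal.ofReal_inv_of_pos (integral_exp_pos hint)]
  · have hexp : AEStronglyMeasurable (fun a => Real.exp (φ a)) μ :=
      (Real.measurable_exp.comp_aemeasurable hφ).aestronglyMeasurable
    have hZ : ∫⁻ a, ENNReal.ofReal (Real.exp (φ a)) ∂μ = ∞ :=
      of_not_not <| (lintegral_ofReal_ne_top_iff_integrable hexp hexp_nonneg).not.2 hint
    simp [tilted_of_not_integrable hint, hZ]

lemma integral_le_of_ae_le [IsZeroOrProbabilityMeasure μ] {f : α → ℝ} {C : ℝ} (hC : 0 ≤ C)
    (hf : ∀ᵐ a ∂μ, f a ≤ C) : ∫ a, f a ∂μ ≤ C := by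
  by_cases hint : Integrable f μ
  · calc ∫ a, f a ∂μ ≤ ∫ _, C ∂μ := integral_mono_ae hint (integrable_const C) hf
      _ = μ.real univ * C := by rw [integral_const, smul_eq_mul]
      _ ≤ C := mul_le_of_le_one_left hC measureReal_le_one
  · rwa [integral_undef hint]

lemma ae_llr_tilted_self_le [IsProbabilityMeasure μ] {g : α → ℝ} {c : ℝ} (hg : AEMeasurable g μ)
    (hgc : ∀ a, |g a| ≤ c) : ∀ᵐ a ∂μ, llr (μ.tilted g) μ a ≤ 2 * c := by
  have hg_int : Integrable (fun a => Real.exp (g a)) μ := by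
    refine (integrable_const (Real.exp c)).mono'
      (Real.measurable_exp.comp_aemeasurable hg).aestronglyMeasurable (ae_of_all _ fun a => ?_)
    rw [Real.norm_of_nonneg (Real.exp_pos _).le]
    exact Real.exp_le_exp.2 (abs_le.1 (hgc a)).2
  have hlog : -c ≤ Real.log (∫ a, Real.exp (g a) ∂μ) := by
    have : Real.exp (-c) ≤ ∫ a, Real.exp (g a) ∂μ := by
      simpa using integral_mono (integrable_const (Real.exp (-c))) hg_int
        fun a => Real.exp_le_exp.2 (abs_le.1 (hgc a)).1
    simpa using Real.log_le_log (Real.exp_pos _) this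
  filter_upwards [log_rnDeriv_tilted_left_self hg_int] with a ha
  simp only [llr_def, ha]
  linarith [(abs_le.1 (hgc a)).2]

lemma integral_llr_tilted_le_of_abs_sub_le [Nonempty α] {φ ψ : α → ℝ} {c : ℝ}
    (hψ : AEMeasurable ψ μ) (hφψ : ∀ a, |φ a - ψ a| ≤ c) :
    ∫ a, llr (μ.tilted φ) (μ.tilted ψ) a ∂(μ.tilted φ) ≤ 2 * c := by
  have hc : 0 ≤ c := (abs_nonneg _).trans (hφψ (Classical.arbitrary α))
  refine integral_le_of_ae_le (by positivity) ?_
  by_cases hφ : Integrable (fun a => Real.exp (φ a)) μ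
  swap
  · simp [tilted_of_not_integrable hφ]
  rcases eq_zero_or_neZero μ with rfl | hμ
  · simp
  have hψint : Integrable (fun a => Real.exp (ψ a)) μ := by
    refine (hφ.const_mul (Real.exp c)).mono'
      (Real.measurable_exp.comp_aemeasurable hψ).aestronglyMeasurable (ae_of_all _ fun a => ?_)
    rw [Real.norm_of_nonneg (Real.exp_pos _).le, ← Real.exp_add]
    exact Real.exp_le_exp.2 (by linarith [(abs_le.1 (hφψ a)).1])
  have : IsProbabilityMeasure (μ.tilted ψ) := isProbabilityMeasure_tilted hψint
  have htilt : μ.tilted φ = (μ.tilted ψ).tilted (φ - ψ) := by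
    rw [tilted_tilted hψint, add_sub_cancel]
  have hφψν : AEMeasurable (φ - ψ) (μ.tilted ψ) :=
    ((Real.aemeasurable_of_aemeasurable_exp hφ.1.aemeasurable).sub hψ).mono_ac
      (tilted_absolutelyContinuous μ ψ)
  rw [htilt]
  exact (tilted_absolutelyContinuous _ _).ae_le (ae_llr_tilted_self_le hφψν hφψ)

end MeasureTheory

lemma continuous_updCoord {d : ℕ} (k : Fin d) (x : Euc d) :
    Continuous fun t => updCoord k t x := by
  unfold updCoord
  fun_prop

lemma norm_updCoord_sub_updCoord {d : ℕ} (k : Fin d) (t : ℝ) (x y : Euc d) :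
    ‖updCoord k t x - updCoord k t y‖ = distMinus k x y := by
  rw [EuclideanSpace.norm_eq, distMinus,
    ← Finset.sum_erase _ (f := fun j => ‖(updCoord k t x - updCoord k t y) j‖ ^ 2) (a := k)
      (by simp [updCoord])]
  congr 1
  refine Finset.sum_congr rfl fun j hj => ?_
  simp [updCoord, Function.update_of_ne (Finset.ne_of_mem_erase hj), sq_abs]

lemma gibbsCond_eq_tilted {d : ℕ} {U : Euc d → ℝ} (hU : Measurable U) (k : Fin d) (x : Euc d) :
    gibbsCond U k x = volume.tilted fun t => -U (updCoord k t x) :=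
  inv_lintegral_smul_withDensity_exp_eq_tilted
    (hU.comp (continuous_updCoord k x).measurable).neg.aemeasurable

theorem conditionals_kl_of_log_lipschitz_general {d : ℕ} (L : ℝ) (U : Euc d → ℝ)
    (hLip : ∀ x y : Euc d, |U x - U y| ≤ L * ‖x - y‖) :
    ∀ (k : Fin d) (x y : Euc d),
      ∫ t, Real.log (((gibbsCond U k x).rnDeriv (gibbsCond U k y) t).toReal)
          ∂(gibbsCond U k x)
        ≤ 2 * L * distMinus k x y := by
  intro k x y
  have hU : Continuous U := (LipschitzWith.of_dist_le' fun a b => by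
    simpa only [Real.dist_eq, dist_eq_norm, Real.norm_eq_abs] using hLip a b).continuous
  have hslice : ∀ t, |-U (updCoord k t x) - -U (updCoord k t y)| ≤ L * distMinus k x y := by
    intro t
    rw [neg_sub_neg, abs_sub_comm, ← norm_updCoord_sub_updCoord k t x y]
    exact hLip _ _
  rw [gibbsCond_eq_tilted hU.measurable, gibbsCond_eq_tilted hU.measurable, mul_assoc]
  exact integral_llr_tilted_le_of_abs_sub_le
    (hU.comp (continuous_updCoord k y)).measurable.neg.aemeasurable hslice

/-- **KL bound between conditionals of log-Lipschitz targets.** If the potential `U` is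
`L`-Lipschitz and `e^{−U}` is integrable, then for all `k`, `x`, `y`,
`KL(π(·|x₋ₖ) ‖ π(·|y₋ₖ)) ≤ 2L·|x₋ₖ − y₋ₖ|`, where `KL(μ‖ν) = ∫ log(dμ/dν) dμ`. -/
theorem conditionals_kl_of_log_lipschitz {d : ℕ} (L : ℝ) (hL : 0 < L) (U : Euc d → ℝ)
    (hLip : ∀ x y : Euc d, |U x - U y| ≤ L * ‖x - y‖)
    (hInt : Integrable fun x : Euc d => Real.exp (-U x)) :
    ∀ (k : Fin d) (x y : Euc d),
      ∫ t, Real.log (((gibbsCond U k x).rnDeriv (gibbsCond U k y) t).toReal)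
          ∂(gibbsCond U k x)
        ≤ 2 * L * distMinus k x y :=
  conditionals_kl_of_log_lipschitz_general L U hLip
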